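/- Fix h > 0, α ∈ (0,π), and let Q ⊂ ℝ^n be a closed cube whose diameter is at most (h/8)·tan(α/2), with center y_Q. Let F be a nonempty set of points x = (x', x_{n+1}) ∈ ℝ^{n+1} with x' ∈ Q and x_{n+1} ∈ [−h/10, 0). Then there exists R > 0, independent of F, such that the ball B((y_Q, h/4), R) is contained in Γ_{h,α}(x) ∩ {z_{n+1} < h/2} for every x ∈ F. Consequently the union Ω_F = ⋃_{x∈F} (Γ_{h,α}(x) ∩ {z : z_{n+1} < h/2}) is an open set star-shaped with respect to the ball B((y_Q, h/4), R). -/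

import Mathlib

open Metric MeasureTheory Set Filter
open scoped Topology

noncomputable section

/-- The open truncated cone in `ℝ^n × ℝ` with vertex `x`, axis `e_{n+1}`, direction
`e_{n+1}`, height `h` and aperture `α`. -/
def coneP {n : ℕ} (h α : ℝ) (x : EuclideanSpace ℝ (Fin n) × ℝ) :
    Set (EuclideanSpace ℝ (Fin n) × ℝ) :=
  {z | ‖z.1 - x.1‖ < (z.2 - x.2) * Real.tan (α / 2) ∧ x.2 < z.2 ∧ z.2 < x.2 + h}

/-!
Let `t = tan (α / 2)`. A point `z` of `B((y_Q, h / 4), R)` lies within `R + h t / 8` of `x'`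
horizontally and more than `h / 4 - R` above `x`, and `R = h t / (8 (1 + t))` is the radius for
which `R + h t / 8 = (h / 4 - R) t`; so `z` lies in the cone at every `x ∈ F`. The truncated cones
are convex, so a segment from a point of this common ball to a point of the union stays in the
cone containing that point.
-/

lemma isCompact_setOf_abs_sub_le {ι : Type*} [Fintype ι] (c : EuclideanSpace ℝ ι) {r : ℝ}
    (hr : 0 ≤ r) : IsCompact {y : EuclideanSpace ℝ ι | ∀ i, |y i - c i| ≤ r} := by
  have hcube : {y : EuclideanSpace ℝ ι | ∀ i, |y i - c i| ≤ r} =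
      EuclideanSpace.equiv ι ℝ ⁻¹' closedBall (EuclideanSpace.equiv ι ℝ c) r := by
    ext y
    simp [dist_pi_le_iff hr, Real.dist_eq]
  rw [hcube]
  exact (EuclideanSpace.equiv ι ℝ).toHomeomorph.isCompact_preimage.2 (isCompact_closedBall _ _)

lemma convexOn_norm_fst_sub_sub_mul_snd {E : Type*} [SeminormedAddCommGroup E]
    [NormedSpace ℝ E] (x : E × ℝ) (t : ℝ) :
    ConvexOn ℝ univ fun z : E × ℝ => ‖z.1 - x.1‖ - (z.2 - x.2) * t := by
  refine ⟨convex_univ, fun z _ w _ a b ha hb hab => ?_⟩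
  have hcomb : (a • z + b • w).1 - x.1 = a • (z.1 - x.1) + b • (w.1 - x.1) := by
    simp only [Prod.fst_add, Prod.smul_fst]
    linear_combination (norm := module) hab • x.1
  have hnorm : ‖a • (z.1 - x.1) + b • (w.1 - x.1)‖ ≤ a * ‖z.1 - x.1‖ + b * ‖w.1 - x.1‖ := by
    simpa only [norm_smul_of_nonneg ha, norm_smul_of_nonneg hb] using
      norm_add_le (a • (z.1 - x.1)) (b • (w.1 - x.1))
  simp only [hcomb, Prod.snd_add, Prod.smul_snd, smul_eq_mul]
  linear_combination hnorm - t * x.2 * hab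

lemma convex_coneP {n : ℕ} (h α : ℝ) (x : EuclideanSpace ℝ (Fin n) × ℝ) :
    Convex ℝ (coneP h α x) := by
  have hconeP : coneP h α x = {z ∈ univ | ‖z.1 - x.1‖ - (z.2 - x.2) * Real.tan (α / 2) < 0} ∩
      LinearMap.snd ℝ (EuclideanSpace ℝ (Fin n)) ℝ ⁻¹' Ioo x.2 (x.2 + h) := by
    ext z
    simp [coneP]
  rw [hconeP]
  exact ((convexOn_norm_fst_sub_sub_mul_snd x _).convex_lt 0).inter
    ((convex_Ioo _ _).linear_preimage _)

lemma isOpen_coneP {n : ℕ} (h α : ℝ) (x : EuclideanSpace ℝ (Fin n) × ℝ) :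
    IsOpen (coneP h α x) := by
  simp only [coneP, ofPred_and]
  exact (isOpen_lt (by fun_prop) (by fun_prop)).inter
    ((isOpen_lt continuous_const continuous_snd).inter (isOpen_lt continuous_snd continuous_const))

lemma ball_subset_coneP_inter {n : ℕ} {h α R : ℝ} {x : EuclideanSpace ℝ (Fin n) × ℝ}
    {y : EuclideanSpace ℝ (Fin n)} (ht : 0 ≤ Real.tan (α / 2))
    (hR : R ≤ h * Real.tan (α / 2) / (8 * (1 + Real.tan (α / 2))))
    (hx₁ : dist x.1 y ≤ h / 8 * Real.tan (α / 2)) (hx₂ : x.2 ∈ Ico (-(h / 10)) 0) :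
    ball (y, h / 4) R ⊆ coneP h α x ∩ {z | z.2 < h / 2} := by
  set t := Real.tan (α / 2)
  intro z hz
  have hR₀ : 0 < R := pos_of_mem_ball hz
  rw [le_div_iff₀ (by positivity)] at hR
  have hRh : R < h / 8 := by nlinarith
  rw [mem_ball, Prod.dist_eq, max_lt_iff, Real.dist_eq, abs_lt] at hz
  obtain ⟨hz₁, hz₂, hz₂'⟩ := hz
  obtain ⟨hx₂, hx₂'⟩ := hx₂
  have hnorm : ‖z.1 - x.1‖ < R + h / 8 * t := by
    rw [← dist_eq_norm]
    linarith [dist_triangle_right z.1 x.1 y]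
  have hheight : (h / 4 - R) * t ≤ (z.2 - x.2) * t :=
    mul_le_mul_of_nonneg_right (by linarith) ht
  exact ⟨⟨by linarith, by linarith, by linarith⟩, show z.2 < h / 2 by linarith⟩

/-- Claim 4.4: the union of the truncated cones over the points of `F` above a fixed
cube is star-shaped with respect to a ball, with radius independent of `F`. -/
theorem stmt3 {n : ℕ} (h α : ℝ) (hh : 0 < h) (hα : α ∈ Set.Ioo 0 Real.pi)
    (Q : Set (EuclideanSpace ℝ (Fin n))) (yQ : EuclideanSpace ℝ (Fin n))
    (hQ : ∃ s : ℝ, 0 ≤ s ∧ Q = {y | ∀ i, |y i - yQ i| ≤ s / 2})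
    (hdiam : Metric.diam Q ≤ h / 8 * Real.tan (α / 2)) :
    ∃ R : ℝ, 0 < R ∧
      ∀ F : Set (EuclideanSpace ℝ (Fin n) × ℝ), F.Nonempty →
        (∀ x ∈ F, x.1 ∈ Q ∧ x.2 ∈ Set.Ico (-(h / 10)) 0) →
        (∀ x ∈ F,
          ball ((yQ, h / 4) : EuclideanSpace ℝ (Fin n) × ℝ) R ⊆
            coneP h α x ∩ {z : EuclideanSpace ℝ (Fin n) × ℝ | z.2 < h / 2}) ∧
        IsOpen (⋃ x ∈ F, coneP h α x ∩ {z : EuclideanSpace ℝ (Fin n) × ℝ | z.2 < h / 2}) ∧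
        ∀ z ∈ ⋃ x ∈ F, coneP h α x ∩ {z : EuclideanSpace ℝ (Fin n) × ℝ | z.2 < h / 2},
          ∀ w ∈ ball ((yQ, h / 4) : EuclideanSpace ℝ (Fin n) × ℝ) R,
            segment ℝ w z ⊆
              ⋃ x ∈ F, coneP h α x ∩ {z : EuclideanSpace ℝ (Fin n) × ℝ | z.2 < h / 2} := by
  obtain ⟨hα₀, hαπ⟩ := hα
  set t := Real.tan (α / 2)
  have ht : 0 < t := Real.tan_pos_of_pos_of_lt_pi_div_two (by linarith) (by linarith)
  obtain ⟨s, hs, hQ⟩ := hQ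
  have hyQ : yQ ∈ Q := by
    rw [hQ]
    exact fun i => by simpa using by positivity
  have hQc : IsCompact Q := hQ ▸ isCompact_setOf_abs_sub_le yQ (by positivity)
  have hdist : ∀ y ∈ Q, dist y yQ ≤ h / 8 * t := fun y hy =>
    (dist_le_diam_of_mem hQc.isBounded hy hyQ).trans hdiam
  refine ⟨h * t / (8 * (1 + t)), by positivity, fun F _ hF => ?_⟩
  have hball : ∀ x ∈ F, ball (yQ, h / 4) (h * t / (8 * (1 + t))) ⊆
      coneP h α x ∩ {z | z.2 < h / 2} := fun x hx =>
    ball_subset_coneP_inter ht.le le_rfl (hdist _ (hF x hx).1) (hF x hx).2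
  refine ⟨hball, isOpen_biUnion fun x _ =>
    (isOpen_coneP h α x).inter (isOpen_lt continuous_snd continuous_const), fun z hz w hw => ?_⟩
  refine (starConvex_iUnion₂ fun x hx => ?_).segment_subset hz
  exact ((convex_coneP h α x).inter ((convex_Iio (h / 2)).linear_preimage
    (LinearMap.snd ℝ _ ℝ))).starConvex (hball x hx hw)
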